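/- For all V_d, V_q ∈ ℝⁿ with x = (V_d; V_q) ∈ ℝ^{2n}, the quadratic form of the line-flow matrix 𝐙̄_{lm} satisfies xᵀ·𝐙̄_{lm}·x = −(V_{dl}² + V_{ql}²)·(b + b_sh/2)/τ² + (V_{dl}V_{dm} + V_{ql}V_{qm})·(b·cos θ + g·sin θ)/τ + (V_{dl}V_{qm} − V_{ql}V_{dm})·(g·cos θ − b·sin θ)/τ, i.e., tr(𝐙̄_{lm}·x·xᵀ) equals the reactive power flow Q_{lm} into the line at bus l. -/

import Mathlib

open Matrix

theorem Matrix.dotProduct_single_mulVec {ι R : Type*} [Fintype ι] [DecidableEq ι]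
    [CommSemiring R] (i j : ι) (c : R) (v w : ι → R) :
    v ⬝ᵥ (single i j c *ᵥ w) = c * v i * w j := by
  rw [single_mulVec_eq, dotProduct_smul, dotProduct_single_one, smul_eq_mul]
  ring

theorem stmt_18_general (n : ℕ) (l m : Fin n)
    (τ θ g b bsh : ℝ)
    (clm slm : ℝ)
    (hclm : clm = (g * Real.cos θ - b * Real.sin θ) / (2 * τ))
    (hslm : slm = (g * Real.sin θ + b * Real.cos θ) / (2 * τ))
    (Z : Matrix (Fin n ⊕ Fin n) (Fin n ⊕ Fin n) ℝ)
    (hZ : Z = (-((2 * b + bsh) / (2 * τ ^ 2))) •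
            (Matrix.single (Sum.inl l) (Sum.inl l) (1 : ℝ)
            + Matrix.single (Sum.inr l) (Sum.inr l) 1)
        + clm • (Matrix.single (Sum.inl l) (Sum.inr m) (1 : ℝ)
            + Matrix.single (Sum.inr m) (Sum.inl l) 1
            - Matrix.single (Sum.inr l) (Sum.inl m) 1
            - Matrix.single (Sum.inl m) (Sum.inr l) 1)
        + slm • (Matrix.single (Sum.inl l) (Sum.inl m) (1 : ℝ)
            + Matrix.single (Sum.inl m) (Sum.inl l) 1
            + Matrix.single (Sum.inr l) (Sum.inr m) 1
            + Matrix.single (Sum.inr m) (Sum.inr l) 1))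
    (Vd Vq : Fin n → ℝ) (x : Fin n ⊕ Fin n → ℝ) (hx : x = Sum.elim Vd Vq) :
    x ⬝ᵥ Z.mulVec x
      = -(Vd l ^ 2 + Vq l ^ 2) * (b + bsh / 2) / τ ^ 2
        + (Vd l * Vd m + Vq l * Vq m) * (b * Real.cos θ + g * Real.sin θ) / τ
        + (Vd l * Vq m - Vq l * Vd m) * (g * Real.cos θ - b * Real.sin θ) / τ := by
  subst hZ hx hclm hslm
  simp only [add_mulVec, sub_mulVec, smul_mulVec, dotProduct_add, dotProduct_sub,
    dotProduct_smul, dotProduct_single_mulVec, smul_eq_mul, Sum.elim_inl, Sum.elim_inr]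
  ring

/-- The quadratic form of the line-flow matrix 𝐙̄_{lm} equals the
reactive power flow Q_{lm} into the line at bus l, in rectangular voltage coordinates. -/
theorem stmt_18 (n : ℕ) (hn : 2 ≤ n) (l m : Fin n) (hlm : l ≠ m)
    (τ θ g b bsh : ℝ) (hτ : 0 < τ)
    (clm slm : ℝ)
    (hclm : clm = (g * Real.cos θ - b * Real.sin θ) / (2 * τ))
    (hslm : slm = (g * Real.sin θ + b * Real.cos θ) / (2 * τ))
    (Z : Matrix (Fin n ⊕ Fin n) (Fin n ⊕ Fin n) ℝ)
    (hZ : Z = (-((2 * b + bsh) / (2 * τ ^ 2))) •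
            (Matrix.single (Sum.inl l) (Sum.inl l) (1 : ℝ)
            + Matrix.single (Sum.inr l) (Sum.inr l) 1)
        + clm • (Matrix.single (Sum.inl l) (Sum.inr m) (1 : ℝ)
            + Matrix.single (Sum.inr m) (Sum.inl l) 1
            - Matrix.single (Sum.inr l) (Sum.inl m) 1
            - Matrix.single (Sum.inl m) (Sum.inr l) 1)
        + slm • (Matrix.single (Sum.inl l) (Sum.inl m) (1 : ℝ)
            + Matrix.single (Sum.inl m) (Sum.inl l) 1
            + Matrix.single (Sum.inr l) (Sum.inr m) 1
            + Matrix.single (Sum.inr m) (Sum.inr l) 1))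
    (Vd Vq : Fin n → ℝ) (x : Fin n ⊕ Fin n → ℝ) (hx : x = Sum.elim Vd Vq) :
    x ⬝ᵥ Z.mulVec x
      = -(Vd l ^ 2 + Vq l ^ 2) * (b + bsh / 2) / τ ^ 2
        + (Vd l * Vd m + Vq l * Vq m) * (b * Real.cos θ + g * Real.sin θ) / τ
        + (Vd l * Vq m - Vq l * Vd m) * (g * Real.cos θ - b * Real.sin θ) / τ :=
  stmt_18_general n l m τ θ g b bsh clm slm hclm hslm Z hZ Vd Vq x hx
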